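/- arXiv:2509.06250 — 13 statements merged into one kernel-verified Lean document; each statement's English description precedes it below -/
import Mathlib

section
/- Interference freedom: if I is a local inductive invariant proving the contract ⟨A⟩ C₁ ⟨G⟩, and C₂ is a transition system over disjoint state variables, then I is also a local inductive invariant proving ⟨A⟩ C₁ ∥ C₂ ⟨G⟩, where ∥ denotes parallel composition in which transitions are either synchronized shared actions, or C₁-only actions leaving C₂'s state unchanged, or C₂-only actions leaving C₁'s state unchanged. -/
structure TS (S : Type) where
  Init : S → Prop
  Next : S → S → Prop

/-- A local inductive invariant for a contract: initiation, consecution under the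
assumption, and safety. -/
def LocalInd {S : Type} (C : TS S) (A G I : S → Prop) : Prop :=
  (∀ s, C.Init s → A s → I s) ∧
  (∀ s t, I s → C.Next s t → A s → A t → I t) ∧
  (∀ s, I s → G s)

/-- Parallel composition: synchronized steps, C₁-only steps (C₂ unchanged), or
C₂-only steps (C₁ unchanged). -/
def par {S₁ S₂ : Type} (C₁ : TS S₁) (C₂ : TS S₂) : TS (S₁ × S₂) where
  Init s := C₁.Init s.1 ∧ C₂.Init s.2
  Next s t := (C₁.Next s.1 t.1 ∧ C₂.Next s.2 t.2) ∨
              (C₁.Next s.1 t.1 ∧ s.2 = t.2) ∨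
              (s.1 = t.1 ∧ C₂.Next s.2 t.2)

/-- Interference freedom: a local inductive invariant for ⟨A⟩ C₁ ⟨G⟩, where A, G, I
depend only on C₁'s state, is also one for ⟨A⟩ C₁ ∥ C₂ ⟨G⟩. -/
theorem interference_freedom {S₁ S₂ : Type} (C₁ : TS S₁) (C₂ : TS S₂)
    (A G I : S₁ → Prop) (h : LocalInd C₁ A G I) :
    LocalInd (par C₁ C₂) (fun s => A s.1) (fun s => G s.1) (fun s => I s.1) := by
  obtain ⟨hinit, hcons, hsafe⟩ := h
  refine ⟨fun s hs hA => hinit s.1 hs.1 hA, fun s t hI hN hA hA' => ?_, fun s hI => hsafe s.1 hI⟩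
  rcases hN with ⟨h1, _⟩ | ⟨h1, _⟩ | ⟨h1, _⟩
  · exact hcons s.1 t.1 hI h1 hA hA'
  · exact hcons s.1 t.1 hI h1 hA hA'
  · exact h1 ▸ hI
end

section
/- Naive composition rule: if I₁ proves the contract ⟨A⟩ C₁ ⟨R⟩ and I₂ proves ⟨R⟩ C₂ ⟨G⟩, where A and R depend only on C₁'s state, R and G depend only on C₂'s state (so R depends on neither, i.e., R is a constant-state proposition over shared parameters), then I₁ ∧ I₂ proves the contract ⟨A⟩ C₁ ∥ C₂ ⟨G⟩. -/
/-- Naive composition: if I₁ proves ⟨A⟩ C₁ ⟨R⟩ and I₂ proves ⟨R⟩ C₂ ⟨G⟩, where R is a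
state-independent proposition (components share no variables), then I₁ ∧ I₂ proves
⟨A⟩ C₁ ∥ C₂ ⟨G⟩. -/
theorem naive_comp {S₁ S₂ : Type} (C₁ : TS S₁) (C₂ : TS S₂)
    (A I₁ : S₁ → Prop) (G I₂ : S₂ → Prop) (R : Prop)
    (h1 : LocalInd C₁ A (fun _ => R) I₁)
    (h2 : LocalInd C₂ (fun _ => R) G I₂) :
    LocalInd (par C₁ C₂) (fun s => A s.1) (fun s => G s.2)
      (fun s => I₁ s.1 ∧ I₂ s.2) := by
  obtain ⟨ha1, hn1, hg1⟩ := h1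
  obtain ⟨ha2, hn2, hg2⟩ := h2
  refine ⟨?_, ?_, ?_⟩
  · rintro ⟨s1, s2⟩ ⟨hi1, hi2⟩ hA
    have hI1 := ha1 s1 hi1 hA
    exact ⟨hI1, ha2 s2 hi2 (hg1 s1 hI1)⟩
  · rintro ⟨s1, s2⟩ ⟨t1, t2⟩ ⟨hI1, hI2⟩ hnext hAs hAt
    have hR := hg1 s1 hI1
    rcases hnext with ⟨n1, n2⟩ | ⟨n1, he⟩ | ⟨he, n2⟩
    · exact ⟨hn1 s1 t1 hI1 n1 hAs hAt, hn2 s2 t2 hI2 n2 hR hR⟩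
    · exact ⟨hn1 s1 t1 hI1 n1 hAs hAt, he ▸ hI2⟩
    · exact ⟨he ▸ hI1, hn2 s2 t2 hI2 n2 hR hR⟩
  · rintro ⟨s1, s2⟩ ⟨hI1, hI2⟩
    exact hg2 s2 hI2
end

section
/- Bridge composition rule: if I₁ is a local inductive invariant proving ⟨A⟩ C₁ ∥ B ⟨R⟩ and I₂ is a local inductive invariant proving ⟨R⟩ B ∥ C₂ ⟨G⟩, where the bridge formulas A, R, G refer only to the states of C₁∥B and B∥C₂ respectively (with R depending only on B's state), then I₁ ∧ I₂ is a local inductive invariant proving ⟨A⟩ C₁ ∥ B ∥ C₂ ⟨G⟩. -/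
/-- Parallel composition in which each component either takes a step of its own
transition relation or stutters. -/
def parS {S₁ S₂ : Type} (C₁ : TS S₁) (C₂ : TS S₂) : TS (S₁ × S₂) where
  Init s := C₁.Init s.1 ∧ C₂.Init s.2
  Next s t := (C₁.Next s.1 t.1 ∨ s.1 = t.1) ∧ (C₂.Next s.2 t.2 ∨ s.2 = t.2)

/-- Bridge composition: if I₁ proves ⟨A⟩ C₁ ∥ B ⟨R⟩ and I₂ proves ⟨R⟩ B ∥ C₂ ⟨G⟩,
with R depending only on B's state, then I₁ ∧ I₂ proves ⟨A⟩ C₁ ∥ B ∥ C₂ ⟨G⟩. -/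
theorem bridge_comp {S₁ SB S₂ : Type} (C₁ : TS S₁) (B : TS SB) (C₂ : TS S₂)
    (A I₁ : S₁ × SB → Prop) (R : SB → Prop) (G I₂ : SB × S₂ → Prop)
    (h1 : LocalInd (parS C₁ B) A (fun s => R s.2) I₁)
    (h2 : LocalInd (parS B C₂) (fun s => R s.1) G I₂) :
    LocalInd (parS C₁ (parS B C₂))
      (fun s => A (s.1, s.2.1))
      (fun s => G (s.2.1, s.2.2))
      (fun s => I₁ (s.1, s.2.1) ∧ I₂ (s.2.1, s.2.2)) := by
  obtain ⟨h1i, h1n, h1g⟩ := h1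
  obtain ⟨h2i, h2n, h2g⟩ := h2
  refine ⟨?_, ?_, ?_⟩
  · rintro ⟨s1, sb, s2⟩ ⟨hi1, hib, hi2⟩ hA
    have hI1 : I₁ (s1, sb) := h1i (s1, sb) ⟨hi1, hib⟩ hA
    exact ⟨hI1, h2i (sb, s2) ⟨hib, hi2⟩ (h1g (s1, sb) hI1)⟩
  · rintro ⟨s1, sb, s2⟩ ⟨t1, tb, t2⟩ ⟨hI1, hI2⟩ ⟨hn1, hnbc⟩ hAs hAt
    obtain ⟨hnb, hn2⟩ : (B.Next sb tb ∨ sb = tb) ∧ (C₂.Next s2 t2 ∨ s2 = t2) := by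
      rcases hnbc with h | h
      · exact h
      · simp only [Prod.mk.injEq] at h
        exact ⟨Or.inr h.1, Or.inr h.2⟩
    have hI1' : I₁ (t1, tb) := h1n (s1, sb) (t1, tb) hI1 ⟨hn1, hnb⟩ hAs hAt
    have hI2' : I₂ (tb, t2) := h2n (sb, s2) (tb, t2) hI2 ⟨hnb, hn2⟩
      (h1g (s1, sb) hI1) (h1g (t1, tb) hI1')
    exact ⟨hI1', hI2'⟩
  · rintro ⟨s1, sb, s2⟩ ⟨hI1, hI2⟩
    exact h2g (sb, s2) hI2
end

section
/- Auxiliary composition rule: if I₁ proves ⟨A⟩ C₁ ∥ B ⟨R⟩, I₂ proves ⟨R⟩ B ∥ C₂ ⟨G⟩, and B is an auxiliary component (meaning for any contract, fulfillment of ⟨A⟩ C ∥ B ⟨G⟩ implies fulfillment of ⟨A⟩ C ⟨G⟩), then the contract ⟨A⟩ C₁ ∥ C₂ ⟨G⟩ is fulfilled. -/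
/-- The contract ⟨A⟩ C ⟨G⟩ is fulfilled: every behavior of the system with initial
condition `Init ∧ A` and transition `Next ∧ A'` satisfies □G. -/
def Fulfilled {S : Type} (C : TS S) (A G : S → Prop) : Prop :=
  ∀ τ : ℕ → S,
    ((C.Init (τ 0) ∧ A (τ 0)) ∧ ∀ i, C.Next (τ i) (τ (i + 1)) ∧ A (τ (i + 1))) →
    ∀ i, G (τ i)

/-- B is an auxiliary component: for any component C and predicates A, G over its
state, fulfillment of ⟨A⟩ C ∥ B ⟨G⟩ implies fulfillment of ⟨A⟩ C ⟨G⟩. -/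
def Aux {SB : Type} (B : TS SB) : Prop :=
  ∀ (S : Type) (C : TS S) (A G : S → Prop),
    Fulfilled (parS C B) (fun s => A s.1) (fun s => G s.1) → Fulfilled C A G

/-- Auxiliary composition: if I₁ proves ⟨A⟩ C₁ ∥ B ⟨R⟩, I₂ proves ⟨R⟩ B ∥ C₂ ⟨G⟩, and
B is auxiliary, then ⟨A⟩ C₁ ∥ C₂ ⟨G⟩ is fulfilled. -/
theorem aux_comp {S₁ SB S₂ : Type} (C₁ : TS S₁) (B : TS SB) (C₂ : TS S₂)
    (A : S₁ → Prop) (R : SB → Prop) (G : S₂ → Prop)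
    (I₁ : S₁ × SB → Prop) (I₂ : SB × S₂ → Prop)
    (h1 : LocalInd (parS C₁ B) (fun s => A s.1) (fun s => R s.2) I₁)
    (h2 : LocalInd (parS B C₂) (fun s => R s.1) (fun s => G s.2) I₂)
    (hB : Aux B) :
    Fulfilled (parS C₁ C₂) (fun s => A s.1) (fun s => G s.2) := by
  obtain ⟨h1i, h1s, h1g⟩ := h1
  obtain ⟨h2i, h2s, h2g⟩ := h2
  apply hB (S₁ × S₂) (parS C₁ C₂) (fun s => A s.1) (fun s => G s.2)
  rintro τ ⟨⟨⟨⟨hi1, hi2⟩, hiB⟩, hA0⟩, hstep⟩ i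
  -- A holds at every index
  have hA : ∀ j, A (τ j).1.1 := by
    intro j
    cases j with
    | zero => exact hA0
    | succ n => exact (hstep n).2
  -- I₁ holds at every index
  have hI1 : ∀ j, I₁ ((τ j).1.1, (τ j).2) := by
    intro j
    induction j with
    | zero => exact h1i _ ⟨hi1, hiB⟩ hA0
    | succ n ih =>
      obtain ⟨⟨hn12, hnB⟩, _⟩ := hstep n
      have hn1 : C₁.Next (τ n).1.1 (τ (n + 1)).1.1 ∨ (τ n).1.1 = (τ (n + 1)).1.1 := by
        rcases hn12 with ⟨h, _⟩ | h
        · exact h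
        · exact Or.inr (by rw [h])
      exact h1s _ _ ih ⟨hn1, hnB⟩ (hA n) (hA (n + 1))
  have hR : ∀ j, R (τ j).2 := fun j => h1g _ (hI1 j)
  -- I₂ holds at every index
  have hI2 : ∀ j, I₂ ((τ j).2, (τ j).1.2) := by
    intro j
    induction j with
    | zero => exact h2i _ ⟨hiB, hi2⟩ (hR 0)
    | succ n ih =>
      obtain ⟨⟨hn12, hnB⟩, _⟩ := hstep n
      have hn2 : C₂.Next (τ n).1.2 (τ (n + 1)).1.2 ∨ (τ n).1.2 = (τ (n + 1)).1.2 := by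
        rcases hn12 with ⟨_, h⟩ | h
        · exact h
        · exact Or.inr (by rw [h])
      exact h2s _ _ ih ⟨hnB, hn2⟩ (hR n) (hR (n + 1))
  exact h2g _ (hI2 i)
end

section
/- A transition system in which every action is enabled in every state is an auxiliary component: if every behavior of the composed system C ∥ B projects from a behavior of C (because B never blocks any step of C), then fulfillment of the contract ⟨A⟩ C ∥ B ⟨G⟩ (where A and G depend only on C's state) implies fulfillment of ⟨A⟩ C ⟨G⟩. -/
/-- A total (never-blocking) component B is auxiliary: fulfillment of ⟨A⟩ C ∥ B ⟨G⟩
(with A, G depending only on C's state) implies fulfillment of ⟨A⟩ C ⟨G⟩, where the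
composition steps C and B synchronously. -/
theorem total_component_is_auxiliary {SC SB : Type}
    (InitC : SC → Prop) (NextC : SC → SC → Prop)
    (InitB : SB → Prop) (NextB : SB → SB → Prop)
    (A G : SC → Prop)
    (hInitB : ∃ b₀, InitB b₀)
    (hTotalB : ∀ b, ∃ b', NextB b b')
    (hComp : ∀ τ : ℕ → SC × SB,
      (((InitC (τ 0).1 ∧ InitB (τ 0).2) ∧ A (τ 0).1) ∧
        ∀ i, (NextC (τ i).1 (τ (i + 1)).1 ∧ NextB (τ i).2 (τ (i + 1)).2) ∧
          A (τ (i + 1)).1) →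
      ∀ i, G (τ i).1) :
    ∀ τ : ℕ → SC,
      ((InitC (τ 0) ∧ A (τ 0)) ∧ ∀ i, NextC (τ i) (τ (i + 1)) ∧ A (τ (i + 1))) →
      ∀ i, G (τ i) := by
  intro τ hτ i
  obtain ⟨b₀, hb₀⟩ := hInitB
  let b : ℕ → SB := fun n => Nat.rec b₀ (fun _ prev => Classical.choose (hTotalB prev)) n
  have hb : ∀ n, NextB (b n) (b (n + 1)) := fun n => Classical.choose_spec (hTotalB (b n))
  exact hComp (fun n => (τ n, b n))
    ⟨⟨⟨hτ.1.1, hb₀⟩, hτ.1.2⟩, fun j => ⟨⟨(hτ.2 j).1, hb j⟩, (hτ.2 j).2⟩⟩ i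
end

section
/- Semantic equivalence of an action invariant and its transition-system translation: an action-based behavior σ satisfies the action invariant □φ if and only if σ satisfies the transition system T(□φ), which is the fluent-tracking transition system B(φ) with its initial condition strengthened by the state translation R(φ) and its transition relation strengthened by R(φ) holding in the post-state. -/
/-- Semantic equivalence of an action invariant □φ and its transition-system
translation T(□φ): σ satisfies □φ (i.e. every corresponding state behavior of the
fluent system B satisfies R everywhere) iff σ admits a behavior of the system with
initial condition `Init ∧ R` and steps `step ∧ R` in the post-state. -/
theorem action_invariant_equiv_transition_system {V Act : Type}
    (Init : V → Prop) (step : Act → V → V → Prop) (R : V → Prop)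
    (hInit : ∃! v₀, Init v₀)
    (hDet : ∀ a v w₁ w₂, step a v w₁ → step a v w₂ → w₁ = w₂)
    (hTotal : ∀ a v, ∃ w, step a v w)
    (σ : ℕ → Act) :
    (∀ τ : ℕ → V, (Init (τ 0) ∧ ∀ i, step (σ i) (τ i) (τ (i + 1))) →
        ∀ i, R (τ i)) ↔
    (∃ τ : ℕ → V, (Init (τ 0) ∧ R (τ 0)) ∧
        ∀ i, step (σ i) (τ i) (τ (i + 1)) ∧ R (τ (i + 1))) := by
  obtain ⟨v₀, hv₀, huniq⟩ := hInit
  constructor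
  · intro h
    -- build the canonical behavior
    let τ : ℕ → V := fun n => Nat.rec v₀ (fun i v => Classical.choose (hTotal (σ i) v)) n
    have hstep : ∀ i, step (σ i) (τ i) (τ (i + 1)) := fun i =>
      Classical.choose_spec (hTotal (σ i) (τ i))
    have hR := h τ ⟨hv₀, hstep⟩
    exact ⟨τ, ⟨hv₀, hR 0⟩, fun i => ⟨hstep i, hR (i + 1)⟩⟩
  · rintro ⟨τ, ⟨hI, hR0⟩, hst⟩ τ' ⟨hI', hst'⟩ i
    have heq : ∀ n, τ' n = τ n := by
      intro n
      induction n with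
      | zero => rw [huniq _ hI', huniq _ hI]
      | succ k ih => exact hDet (σ k) (τ k) _ _ (ih ▸ hst' k) (hst k).1
    rw [heq]
    cases i with
    | zero => exact hR0
    | succ k => exact (hst k).2
end

section
/- Soundness of local inductive invariants for action-based contracts: if I is a local inductive invariant proving the translated state-based contract ⟨R(α)⟩ B(α) ∥ C ∥ B(γ) ⟨R(γ)⟩, then the action-based contract ⟨α⟩ C ⟨γ⟩ is fulfilled, i.e., every action behavior of T(□α) ∥ C is also an action behavior of T(□γ). -/
/-- Soundness of local inductive invariants for action-based contracts: if I is a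
local inductive invariant for the translated state contract
⟨R(α)⟩ B(α) ∥ C ∥ B(γ) ⟨R(γ)⟩, then the action contract ⟨α⟩ C ⟨γ⟩ is fulfilled:
every action behavior of T(□α) ∥ C is an action behavior of T(□γ). -/
theorem action_local_ii_sound {Vα SC Vγ Act : Type}
    (InitA : Vα → Prop) (stepA : Act → Vα → Vα → Prop) (Rα : Vα → Prop)
    (InitC : SC → Prop) (stepC : Act → SC → SC → Prop)
    (InitG : Vγ → Prop) (stepG : Act → Vγ → Vγ → Prop) (Rγ : Vγ → Prop)
    -- the fluent systems are deterministic, always enabled, with unique initial states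
    (hInitG : ∃! w₀, InitG w₀)
    (hDetG : ∀ a w w₁ w₂, stepG a w w₁ → stepG a w w₂ → w₁ = w₂)
    (hTotalG : ∀ a w, ∃ w', stepG a w w')
    (I : Vα × SC × Vγ → Prop)
    -- local inductive invariant for the translated state-based contract
    (hInit : ∀ v c w, InitA v → InitC c → InitG w → Rα v → I (v, c, w))
    (hCons : ∀ a v c w v' c' w', I (v, c, w) →
      stepA a v v' → stepC a c c' → stepG a w w' →
      Rα v → Rα v' → I (v', c', w'))
    (hSafe : ∀ v c w, I (v, c, w) → Rγ w) :
    ∀ σ : ℕ → Act,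
      (∃ τ : ℕ → Vα × SC,
        ((InitA (τ 0).1 ∧ Rα (τ 0).1) ∧ InitC (τ 0).2) ∧
        ∀ i, (stepA (σ i) (τ i).1 (τ (i + 1)).1 ∧ Rα (τ (i + 1)).1) ∧
             stepC (σ i) (τ i).2 (τ (i + 1)).2) →
      (∃ υ : ℕ → Vγ, (InitG (υ 0) ∧ Rγ (υ 0)) ∧
        ∀ i, stepG (σ i) (υ i) (υ (i + 1)) ∧ Rγ (υ (i + 1))) := by

  intro σ
  rintro ⟨τ, ⟨⟨hA0, hR0⟩, hC0⟩, hstep⟩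
  obtain ⟨w₀, hw₀, _⟩ := hInitG
  let υ : ℕ → Vγ := fun n => Nat.rec w₀ (fun i w => Classical.choose (hTotalG (σ i) w)) n
  have hstepG : ∀ i, stepG (σ i) (υ i) (υ (i + 1)) := fun i =>
    Classical.choose_spec (hTotalG (σ i) (υ i))
  have hI : ∀ i, I ((τ i).1, (τ i).2, υ i) := by
    intro i
    induction i with
    | zero => exact hInit _ _ _ hA0 hC0 hw₀ hR0
    | succ n ih =>
        exact hCons (σ n) _ _ _ _ _ _ ih (hstep n).1.1 (hstep n).2 (hstepG n)
          (by cases n with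
              | zero => exact hR0
              | succ m => exact (hstep m).1.2) (hstep n).1.2
  exact ⟨υ, ⟨hw₀, hSafe _ _ _ (hI 0)⟩, fun i => ⟨hstepG i, hSafe _ _ _ (hI (i+1))⟩⟩
end

section
/- Soundness of the SFL transitive composition rule: if the translated state-based contracts for ⟨α⟩ C₁ ⟨ρ⟩ and ⟨ρ⟩ C₂ ⟨γ⟩ are each proved by local inductive invariants I₁ and I₂ respectively, then I₁ ∧ I₂ is a local inductive invariant proving the translated state-based contract for ⟨α⟩ C₁ ∥ B(ρ) ∥ C₂ ⟨γ⟩. -/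
/-- Soundness of the SFL transitive composition rule: if I₁ proves the translated
contract ⟨R(α)⟩ B(α) ∥ C₁ ∥ B(ρ) ⟨R(ρ)⟩ and I₂ proves ⟨R(ρ)⟩ B(ρ) ∥ C₂ ∥ B(γ) ⟨R(γ)⟩,
then I₁ ∧ I₂ proves the translated contract for ⟨α⟩ C₁ ∥ B(ρ) ∥ C₂ ⟨γ⟩, over the
composite state V_α × S₁ × V_ρ × S₂ × V_γ (all transitions synchronized on the
common action, fluent systems being always enabled). -/
theorem sfl_comp_sound {Vα S₁ Vρ S₂ Vγ Act : Type}
    (InitA : Vα → Prop) (stepA : Act → Vα → Vα → Prop) (Rα : Vα → Prop)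
    (Init₁ : S₁ → Prop) (step₁ : Act → S₁ → S₁ → Prop)
    (InitR : Vρ → Prop) (stepR : Act → Vρ → Vρ → Prop) (Rρ : Vρ → Prop)
    (Init₂ : S₂ → Prop) (step₂ : Act → S₂ → S₂ → Prop)
    (InitG : Vγ → Prop) (stepG : Act → Vγ → Vγ → Prop) (Rγ : Vγ → Prop)
    (I₁ : Vα × S₁ × Vρ → Prop) (I₂ : Vρ × S₂ × Vγ → Prop)
    -- I₁ is a local inductive invariant for ⟨R(α)⟩ B(α) ∥ C₁ ∥ B(ρ) ⟨R(ρ)⟩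
    (h1Init : ∀ v s w, InitA v → Init₁ s → InitR w → Rα v → I₁ (v, s, w))
    (h1Cons : ∀ a v s w v' s' w', I₁ (v, s, w) →
      stepA a v v' → step₁ a s s' → stepR a w w' →
      Rα v → Rα v' → I₁ (v', s', w'))
    (h1Safe : ∀ v s w, I₁ (v, s, w) → Rρ w)
    -- I₂ is a local inductive invariant for ⟨R(ρ)⟩ B(ρ) ∥ C₂ ∥ B(γ) ⟨R(γ)⟩
    (h2Init : ∀ w s u, InitR w → Init₂ s → InitG u → Rρ w → I₂ (w, s, u))
    (h2Cons : ∀ a w s u w' s' u', I₂ (w, s, u) →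
      stepR a w w' → step₂ a s s' → stepG a u u' →
      Rρ w → Rρ w' → I₂ (w', s', u'))
    (h2Safe : ∀ w s u, I₂ (w, s, u) → Rγ u) :
    -- I₁ ∧ I₂ is a local inductive invariant for
    -- ⟨R(α)⟩ B(α) ∥ C₁ ∥ B(ρ) ∥ C₂ ∥ B(γ) ⟨R(γ)⟩
    (∀ v s₁ w s₂ u, InitA v → Init₁ s₁ → InitR w → Init₂ s₂ → InitG u → Rα v →
        I₁ (v, s₁, w) ∧ I₂ (w, s₂, u)) ∧
    (∀ a v s₁ w s₂ u v' s₁' w' s₂' u',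
        (I₁ (v, s₁, w) ∧ I₂ (w, s₂, u)) →
        stepA a v v' → step₁ a s₁ s₁' → stepR a w w' → step₂ a s₂ s₂' →
        stepG a u u' → Rα v → Rα v' →
        I₁ (v', s₁', w') ∧ I₂ (w', s₂', u')) ∧
    (∀ v s₁ w s₂ u, (I₁ (v, s₁, w) ∧ I₂ (w, s₂, u)) → Rγ u) := by
  refine ⟨?_, ?_, ?_⟩
  · intro v s₁ w s₂ u hA h1 hR h2 hG hRa
    have hI1 := h1Init v s₁ w hA h1 hR hRa
    exact ⟨hI1, h2Init w s₂ u hR h2 hG (h1Safe v s₁ w hI1)⟩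
  · intro a v s₁ w s₂ u v' s₁' w' s₂' u' ⟨hI1, hI2⟩ sA s1 sR s2 sG hv hv'
    have hI1' := h1Cons a v s₁ w v' s₁' w' hI1 sA s1 sR hv hv'
    exact ⟨hI1', h2Cons a w s₂ u w' s₂' u' hI2 sR s2 sG (h1Safe v s₁ w hI1) (h1Safe v' s₁' w' hI1')⟩
  · intro v s₁ w s₂ u ⟨_, hI2⟩
    exact h2Safe w s₂ u hI2
end

section
/- Soundness of the SFL safety rule: if I₁ proves the action contract ⟨α⟩ C₁ ⟨ρ⟩ and I₂ proves ⟨ρ⟩ C₂ ⟨γ⟩ (via their state-based translations), then the action contract ⟨α⟩ C₁ ∥ C₂ ⟨γ⟩ is fulfilled: every action behavior of T(□α) ∥ C₁ ∥ C₂ is an action behavior of T(□γ). -/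
/-- Soundness of the SFL safety rule: if I₁ proves the translated contract for
⟨α⟩ C₁ ⟨ρ⟩ and I₂ proves the translated contract for ⟨ρ⟩ C₂ ⟨γ⟩, then the action
contract ⟨α⟩ C₁ ∥ C₂ ⟨γ⟩ is fulfilled: every action behavior of T(□α) ∥ C₁ ∥ C₂ is
an action behavior of T(□γ). -/
theorem sfl_safe_sound {Vα S₁ Vρ S₂ Vγ Act : Type}
    (InitA : Vα → Prop) (stepA : Act → Vα → Vα → Prop) (Rα : Vα → Prop)
    (Init₁ : S₁ → Prop) (step₁ : Act → S₁ → S₁ → Prop)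
    (InitR : Vρ → Prop) (stepR : Act → Vρ → Vρ → Prop) (Rρ : Vρ → Prop)
    (Init₂ : S₂ → Prop) (step₂ : Act → S₂ → S₂ → Prop)
    (InitG : Vγ → Prop) (stepG : Act → Vγ → Vγ → Prop) (Rγ : Vγ → Prop)
    -- fluent systems are deterministic, always enabled, with unique initial states
    (hInitR : ∃! w₀, InitR w₀)
    (hDetR : ∀ a w w₁ w₂, stepR a w w₁ → stepR a w w₂ → w₁ = w₂)
    (hTotalR : ∀ a w, ∃ w', stepR a w w')
    (hInitG : ∃! u₀, InitG u₀)
    (hDetG : ∀ a u u₁ u₂, stepG a u u₁ → stepG a u u₂ → u₁ = u₂)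
    (hTotalG : ∀ a u, ∃ u', stepG a u u')
    (I₁ : Vα × S₁ × Vρ → Prop) (I₂ : Vρ × S₂ × Vγ → Prop)
    -- I₁ proves ⟨R(α)⟩ B(α) ∥ C₁ ∥ B(ρ) ⟨R(ρ)⟩
    (h1Init : ∀ v s w, InitA v → Init₁ s → InitR w → Rα v → I₁ (v, s, w))
    (h1Cons : ∀ a v s w v' s' w', I₁ (v, s, w) →
      stepA a v v' → step₁ a s s' → stepR a w w' →
      Rα v → Rα v' → I₁ (v', s', w'))
    (h1Safe : ∀ v s w, I₁ (v, s, w) → Rρ w)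
    -- I₂ proves ⟨R(ρ)⟩ B(ρ) ∥ C₂ ∥ B(γ) ⟨R(γ)⟩
    (h2Init : ∀ w s u, InitR w → Init₂ s → InitG u → Rρ w → I₂ (w, s, u))
    (h2Cons : ∀ a w s u w' s' u', I₂ (w, s, u) →
      stepR a w w' → step₂ a s s' → stepG a u u' →
      Rρ w → Rρ w' → I₂ (w', s', u'))
    (h2Safe : ∀ w s u, I₂ (w, s, u) → Rγ u) :
    ∀ σ : ℕ → Act,
      (∃ τ : ℕ → Vα × S₁ × S₂,
        ((InitA (τ 0).1 ∧ Rα (τ 0).1) ∧ Init₁ (τ 0).2.1 ∧ Init₂ (τ 0).2.2) ∧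
        ∀ i, (stepA (σ i) (τ i).1 (τ (i + 1)).1 ∧ Rα (τ (i + 1)).1) ∧
             step₁ (σ i) (τ i).2.1 (τ (i + 1)).2.1 ∧
             step₂ (σ i) (τ i).2.2 (τ (i + 1)).2.2) →
      (∃ υ : ℕ → Vγ, (InitG (υ 0) ∧ Rγ (υ 0)) ∧
        ∀ i, stepG (σ i) (υ i) (υ (i + 1)) ∧ Rγ (υ (i + 1))) := by
  rintro σ ⟨τ, ⟨⟨hIA, hRA0⟩, hI1, hI2⟩, hstep⟩
  obtain ⟨w₀, hw₀, _⟩ := hInitR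
  obtain ⟨u₀, hu₀, _⟩ := hInitG
  -- build the ρ-fluent run
  let w : ℕ → Vρ := fun n => Nat.rec w₀ (fun n wn => Classical.choose (hTotalR (σ n) wn)) n
  have hw : ∀ n, stepR (σ n) (w n) (w (n + 1)) :=
    fun n => Classical.choose_spec (hTotalR (σ n) (w n))
  -- build the γ-fluent run
  let u : ℕ → Vγ := fun n => Nat.rec u₀ (fun n un => Classical.choose (hTotalG (σ n) un)) n
  have hu : ∀ n, stepG (σ n) (u n) (u (n + 1)) :=
    fun n => Classical.choose_spec (hTotalG (σ n) (u n))
  -- joint invariant along the run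
  have key : ∀ n, I₁ ((τ n).1, (τ n).2.1, w n) ∧ I₂ (w n, (τ n).2.2, u n) := by
    intro n
    induction n with
    | zero =>
      refine ⟨h1Init _ _ _ hIA hI1 hw₀ hRA0, ?_⟩
      exact h2Init _ _ _ hw₀ hI2 hu₀ (h1Safe _ _ _ (h1Init _ _ _ hIA hI1 hw₀ hRA0))
    | succ n ih =>
      obtain ⟨hA, hs1, hs2⟩ := hstep n
      have h1' : I₁ ((τ (n+1)).1, (τ (n+1)).2.1, w (n+1)) :=
        h1Cons _ _ _ _ _ _ _ ih.1 hA.1 hs1 (hw n)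
          (by
            cases n with
            | zero => exact hRA0
            | succ m => exact (hstep m).1.2) hA.2
      refine ⟨h1', ?_⟩
      exact h2Cons _ _ _ _ _ _ _ ih.2 (hw n) hs2 (hu n)
        (h1Safe _ _ _ ih.1) (h1Safe _ _ _ h1')
  refine ⟨u, ⟨hu₀, h2Safe _ _ _ (key 0).2⟩, fun i => ⟨hu i, h2Safe _ _ _ (key (i+1)).2⟩⟩
end

section
/- Soundness of local inductive invariants for hybrid contracts: if I is a local inductive invariant proving the state-based contract ⟨R(α)⟩ B(α) ∥ C ⟨G⟩, then the hybrid contract ⟨α⟩ C ⟨G⟩ is fulfilled: the composed transition system T(□α) ∥ C satisfies the state invariant □G. -/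
/-- Soundness of local inductive invariants for hybrid contracts: if I is a local
inductive invariant for the state contract ⟨R(α)⟩ B(α) ∥ C ⟨G⟩, then the hybrid
contract ⟨α⟩ C ⟨G⟩ is fulfilled: every behavior of T(□α) ∥ C satisfies □G. -/
theorem hybrid_local_ii_sound {Vα SC Act : Type}
    (InitA : Vα → Prop) (stepA : Act → Vα → Vα → Prop) (Rα : Vα → Prop)
    (InitC : SC → Prop) (stepC : Act → SC → SC → Prop)
    (G : SC → Prop) (I : Vα × SC → Prop)
    (hInit : ∀ v c, InitA v → InitC c → Rα v → I (v, c))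
    (hCons : ∀ a v c v' c', I (v, c) → stepA a v v' → stepC a c c' →
      Rα v → Rα v' → I (v', c'))
    (hSafe : ∀ v c, I (v, c) → G c) :
    ∀ (σ : ℕ → Act) (τ : ℕ → Vα × SC),
      (((InitA (τ 0).1 ∧ Rα (τ 0).1) ∧ InitC (τ 0).2) ∧
        ∀ i, (stepA (σ i) (τ i).1 (τ (i + 1)).1 ∧ Rα (τ (i + 1)).1) ∧
             stepC (σ i) (τ i).2 (τ (i + 1)).2) →
      ∀ i, G (τ i).2 := by
  rintro σ τ ⟨⟨⟨h0a, h0r⟩, h0c⟩, hstep⟩ i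
  have key : ∀ i, I (τ i) ∧ Rα (τ i).1 := by
    intro i
    induction i with
    | zero => exact ⟨hInit _ _ h0a h0c h0r, h0r⟩
    | succ n ih =>
      obtain ⟨⟨hsA, hR'⟩, hsC⟩ := hstep n
      exact ⟨hCons _ _ _ _ _ ih.1 hsA hsC ih.2 hR', hR'⟩
  exact hSafe _ _ (key i).1
end

section
/- Soundness of hybrid composition: if I₁ is a local inductive invariant proving the translated contract ⟨R(α)⟩ B(α) ∥ C₁ ∥ B(ρ) ⟨R(ρ)⟩ and I₂ is a local inductive invariant proving ⟨R(ρ)⟩ B(ρ) ∥ C₂ ⟨G⟩, then I₁ ∧ I₂ is a local inductive invariant proving ⟨R(α)⟩ B(α) ∥ C₁ ∥ B(ρ) ∥ C₂ ⟨G⟩. -/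
/-- Soundness of hybrid composition: if I₁ proves ⟨R(α)⟩ B(α) ∥ C₁ ∥ B(ρ) ⟨R(ρ)⟩
and I₂ proves ⟨R(ρ)⟩ B(ρ) ∥ C₂ ⟨G⟩, then I₁ ∧ I₂ proves
⟨R(α)⟩ B(α) ∥ C₁ ∥ B(ρ) ∥ C₂ ⟨G⟩ over the composite state V_α × S₁ × V_ρ × S₂. -/
theorem hybrid_comp_sound {Vα S₁ Vρ S₂ Act : Type}
    (InitA : Vα → Prop) (stepA : Act → Vα → Vα → Prop) (Rα : Vα → Prop)
    (Init₁ : S₁ → Prop) (step₁ : Act → S₁ → S₁ → Prop)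
    (InitR : Vρ → Prop) (stepR : Act → Vρ → Vρ → Prop) (Rρ : Vρ → Prop)
    (Init₂ : S₂ → Prop) (step₂ : Act → S₂ → S₂ → Prop)
    (G : S₂ → Prop)
    (I₁ : Vα × S₁ × Vρ → Prop) (I₂ : Vρ × S₂ → Prop)
    -- I₁ is a local inductive invariant for ⟨R(α)⟩ B(α) ∥ C₁ ∥ B(ρ) ⟨R(ρ)⟩
    (h1Init : ∀ v s w, InitA v → Init₁ s → InitR w → Rα v → I₁ (v, s, w))
    (h1Cons : ∀ a v s w v' s' w', I₁ (v, s, w) →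
      stepA a v v' → step₁ a s s' → stepR a w w' →
      Rα v → Rα v' → I₁ (v', s', w'))
    (h1Safe : ∀ v s w, I₁ (v, s, w) → Rρ w)
    -- I₂ is a local inductive invariant for ⟨R(ρ)⟩ B(ρ) ∥ C₂ ⟨G⟩
    (h2Init : ∀ w s, InitR w → Init₂ s → Rρ w → I₂ (w, s))
    (h2Cons : ∀ a w s w' s', I₂ (w, s) → stepR a w w' → step₂ a s s' →
      Rρ w → Rρ w' → I₂ (w', s'))
    (h2Safe : ∀ w s, I₂ (w, s) → G s) :
    (∀ v s₁ w s₂, InitA v → Init₁ s₁ → InitR w → Init₂ s₂ → Rα v →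
        I₁ (v, s₁, w) ∧ I₂ (w, s₂)) ∧
    (∀ a v s₁ w s₂ v' s₁' w' s₂',
        (I₁ (v, s₁, w) ∧ I₂ (w, s₂)) →
        stepA a v v' → step₁ a s₁ s₁' → stepR a w w' → step₂ a s₂ s₂' →
        Rα v → Rα v' →
        I₁ (v', s₁', w') ∧ I₂ (w', s₂')) ∧
    (∀ v s₁ w s₂, (I₁ (v, s₁, w) ∧ I₂ (w, s₂)) → G s₂) := by
  refine ⟨?_, ?_, ?_⟩
  · intro v s₁ w s₂ hA h1 hR h2 hr
    have hi1 := h1Init v s₁ w hA h1 hR hr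
    exact ⟨hi1, h2Init w s₂ hR h2 (h1Safe v s₁ w hi1)⟩
  · rintro a v s₁ w s₂ v' s₁' w' s₂' ⟨hi1, hi2⟩ hsA hs1 hsR hs2 hr hr'
    have hi1' := h1Cons a v s₁ w v' s₁' w' hi1 hsA hs1 hsR hr hr'
    exact ⟨hi1', h2Cons a w s₂ w' s₂' hi2 hsR hs2 (h1Safe v s₁ w hi1) (h1Safe v' s₁' w' hi1')⟩
  · rintro v s₁ w s₂ ⟨_, hi2⟩
    exact h2Safe w s₂ hi2
end

section
/- Hybrid safety rule: if I₁ proves the action contract ⟨α⟩ C₁ ⟨ρ⟩ and I₂ proves the hybrid contract ⟨ρ⟩ C₂ ⟨G⟩ (each via their state-based translations with local inductive invariants), then the hybrid contract ⟨α⟩ C₁ ∥ C₂ ⟨G⟩ is fulfilled: the system T(□α) ∥ C₁ ∥ C₂ satisfies the state invariant □G. -/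
/-- Hybrid safety rule: if I₁ proves the translated contract for ⟨α⟩ C₁ ⟨ρ⟩ and I₂
proves the translated contract for the hybrid contract ⟨ρ⟩ C₂ ⟨G⟩, then the hybrid
contract ⟨α⟩ C₁ ∥ C₂ ⟨G⟩ is fulfilled: every behavior of T(□α) ∥ C₁ ∥ C₂ satisfies
the state invariant □G. -/
theorem hybrid_safe_sound {Vα S₁ Vρ S₂ Act : Type}
    (InitA : Vα → Prop) (stepA : Act → Vα → Vα → Prop) (Rα : Vα → Prop)
    (Init₁ : S₁ → Prop) (step₁ : Act → S₁ → S₁ → Prop)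
    (InitR : Vρ → Prop) (stepR : Act → Vρ → Vρ → Prop) (Rρ : Vρ → Prop)
    (Init₂ : S₂ → Prop) (step₂ : Act → S₂ → S₂ → Prop)
    (G : S₂ → Prop)
    -- the fluent system B(ρ) is deterministic, always enabled, with a unique initial state
    (hInitR : ∃! w₀, InitR w₀)
    (hDetR : ∀ a w w₁ w₂, stepR a w w₁ → stepR a w w₂ → w₁ = w₂)
    (hTotalR : ∀ a w, ∃ w', stepR a w w')
    (I₁ : Vα × S₁ × Vρ → Prop) (I₂ : Vρ × S₂ → Prop)
    -- I₁ proves ⟨R(α)⟩ B(α) ∥ C₁ ∥ B(ρ) ⟨R(ρ)⟩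
    (h1Init : ∀ v s w, InitA v → Init₁ s → InitR w → Rα v → I₁ (v, s, w))
    (h1Cons : ∀ a v s w v' s' w', I₁ (v, s, w) →
      stepA a v v' → step₁ a s s' → stepR a w w' →
      Rα v → Rα v' → I₁ (v', s', w'))
    (h1Safe : ∀ v s w, I₁ (v, s, w) → Rρ w)
    -- I₂ proves ⟨R(ρ)⟩ B(ρ) ∥ C₂ ⟨G⟩
    (h2Init : ∀ w s, InitR w → Init₂ s → Rρ w → I₂ (w, s))
    (h2Cons : ∀ a w s w' s', I₂ (w, s) → stepR a w w' → step₂ a s s' →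
      Rρ w → Rρ w' → I₂ (w', s'))
    (h2Safe : ∀ w s, I₂ (w, s) → G s) :
    ∀ (σ : ℕ → Act) (τ : ℕ → Vα × S₁ × S₂),
      (((InitA (τ 0).1 ∧ Rα (τ 0).1) ∧ Init₁ (τ 0).2.1 ∧ Init₂ (τ 0).2.2) ∧
        ∀ i, (stepA (σ i) (τ i).1 (τ (i + 1)).1 ∧ Rα (τ (i + 1)).1) ∧
             step₁ (σ i) (τ i).2.1 (τ (i + 1)).2.1 ∧
             step₂ (σ i) (τ i).2.2 (τ (i + 1)).2.2) →
      ∀ i, G (τ i).2.2 := by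
  intro σ τ ⟨hinit, hstep⟩
  -- construct the fluent trace
  let w : ℕ → Vρ := fun i => Nat.rec hInitR.choose (fun i wi => (hTotalR (σ i) wi).choose) i
  have hw0 : InitR (w 0) := hInitR.choose_spec.1
  have hwstep : ∀ i, stepR (σ i) (w i) (w (i + 1)) := fun i =>
    (hTotalR (σ i) (w i)).choose_spec
  have hRa : ∀ i, Rα (τ i).1 := by
    intro i
    cases i with
    | zero => exact hinit.1.2
    | succ n => exact (hstep n).1.2
  have key : ∀ i, I₁ ((τ i).1, (τ i).2.1, w i) ∧ I₂ (w i, (τ i).2.2) := by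
    intro i
    induction i with
    | zero =>
      have h1 : I₁ ((τ 0).1, (τ 0).2.1, w 0) :=
        h1Init _ _ _ hinit.1.1 hinit.2.1 hw0 hinit.1.2
      exact ⟨h1, h2Init _ _ hw0 hinit.2.2 (h1Safe _ _ _ h1)⟩
    | succ n ih =>
      have h1 : I₁ ((τ (n+1)).1, (τ (n+1)).2.1, w (n+1)) :=
        h1Cons (σ n) _ _ _ _ _ _ ih.1 (hstep n).1.1 (hstep n).2.1 (hwstep n)
          (hRa n) (hRa (n+1))
      exact ⟨h1, h2Cons (σ n) _ _ _ _ ih.2 (hwstep n) (hstep n).2.2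
        (h1Safe _ _ _ ih.1) (h1Safe _ _ _ h1)⟩
  exact fun i => h2Safe _ _ (key i).2
end

section
/- Compositional inference yields a global inductive invariant: given a decomposition S = C₁ ∥ C₂ of a system into two components over disjoint state spaces, a bridge component B over fresh auxiliary state with all actions always enabled, a bridge predicate R over B's state, and local inductive invariants I₁ for ⟨True⟩ C₁ ∥ B ⟨R⟩ and I₂ for ⟨R⟩ B ∥ C₂ ⟨P⟩, the conjunction I₁ ∧ I₂ is an inductive invariant for the composite system C₁ ∥ B ∥ C₂ proving the state invariant □P, and consequently C₁ ∥ C₂ satisfies □P. -/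
/-- An inductive invariant proving that a system satisfies □P. -/
def IndInv {S : Type} (C : TS S) (P Inv : S → Prop) : Prop :=
  (∀ s, C.Init s → Inv s) ∧
  (∀ s t, Inv s → C.Next s t → Inv t) ∧
  (∀ s, Inv s → P s)

/-- Compositional inference yields a global inductive invariant: given local
inductive invariants I₁ for ⟨True⟩ C₁ ∥ B ⟨R⟩ and I₂ for ⟨R⟩ B ∥ C₂ ⟨P⟩, with B a
total auxiliary bridge component, I₁ ∧ I₂ is an inductive invariant for
C₁ ∥ B ∥ C₂ proving □P, and consequently every behavior of C₁ ∥ C₂ satisfies □P. -/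
theorem compositional_inference_global_invariant {S₁ SB S₂ : Type}
    (C₁ : TS S₁) (B : TS SB) (C₂ : TS S₂)
    (R : SB → Prop) (P : S₂ → Prop)
    (I₁ : S₁ × SB → Prop) (I₂ : SB × S₂ → Prop)
    (hBInit : ∃ b₀, B.Init b₀)
    (hBTotal : ∀ b, ∃ b', B.Next b b')
    (h1 : LocalInd (parS C₁ B) (fun _ => True) (fun s => R s.2) I₁)
    (h2 : LocalInd (parS B C₂) (fun s => R s.1) (fun s => P s.2) I₂) :
    IndInv (parS C₁ (parS B C₂)) (fun s => P s.2.2)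
      (fun s => I₁ (s.1, s.2.1) ∧ I₂ (s.2.1, s.2.2)) ∧
    (∀ τ : ℕ → S₁ × S₂,
      ((parS C₁ C₂).Init (τ 0) ∧ ∀ i, (parS C₁ C₂).Next (τ i) (τ (i + 1))) →
      ∀ i, P (τ i).2) := by
  obtain ⟨h1i, h1s, h1g⟩ := h1
  obtain ⟨h2i, h2s, h2g⟩ := h2
  have hInv : IndInv (parS C₁ (parS B C₂)) (fun s => P s.2.2)
      (fun s => I₁ (s.1, s.2.1) ∧ I₂ (s.2.1, s.2.2)) := by
    refine ⟨?_, ?_, ?_⟩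
    · rintro ⟨a, b, c⟩ ⟨hc1, hb, hc2⟩
      have hi1 : I₁ (a, b) := h1i (a, b) ⟨hc1, hb⟩ trivial
      exact ⟨hi1, h2i (b, c) ⟨hb, hc2⟩ (h1g _ hi1)⟩
    · rintro ⟨a, b, c⟩ ⟨a', b', c'⟩ ⟨hi1, hi2⟩ ⟨hna, hnbc⟩
      have hnb : B.Next b b' ∨ b = b' := by
        rcases hnbc with ⟨h, _⟩ | h
        · exact h
        · exact Or.inr (congrArg Prod.fst h)
      have hnc : C₂.Next c c' ∨ c = c' := by
        rcases hnbc with ⟨_, h⟩ | h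
        · exact h
        · exact Or.inr (congrArg Prod.snd h)
      have hi1' : I₁ (a', b') := h1s (a, b) (a', b') hi1 ⟨hna, hnb⟩ trivial trivial
      exact ⟨hi1', h2s (b, c) (b', c') hi2 ⟨hnb, hnc⟩ (h1g _ hi1) (h1g _ hi1')⟩
    · rintro ⟨a, b, c⟩ ⟨_, hi2⟩
      exact h2g _ hi2
  refine ⟨hInv, ?_⟩
  rintro τ ⟨hτ0, hτs⟩
  obtain ⟨hI, hS, hP⟩ := hInv
  let β : ℕ → SB := fun n => Nat.rec hBInit.choose (fun n b => (hBTotal b).choose) n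
  have hβ0 : B.Init (β 0) := hBInit.choose_spec
  have hβs : ∀ n, B.Next (β n) (β (n + 1)) := fun n => (hBTotal (β n)).choose_spec
  let σ : ℕ → S₁ × SB × S₂ := fun n => ((τ n).1, β n, (τ n).2)
  have hinv : ∀ i, I₁ ((σ i).1, (σ i).2.1) ∧ I₂ ((σ i).2.1, (σ i).2.2) := by
    intro i
    induction i with
    | zero => exact hI (σ 0) ⟨hτ0.1, hβ0, hτ0.2⟩
    | succ n ih =>
      exact hS (σ n) (σ (n + 1)) ih ⟨(hτs n).1, Or.inl ⟨Or.inl (hβs n), (hτs n).2⟩⟩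
  intro i
  exact hP (σ i) (hinv i)
end
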